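/- A Kripke frame validates the Löb schema □(□p → p) → □p if and only if its accessibility relation is transitive and converse well-founded (every nonempty subset X of W has an element with no R-successor in X). -/

import Mathlib

/-- Modal formulas built from propositional atoms, ⊥, →, □. -/
inductive Form : Type
  | atom : ℕ → Form
  | bot  : Form
  | imp  : Form → Form → Form
  | box  : Form → Form

namespace Form
/-- Negation: ¬A := A → ⊥. -/
def neg (A : Form) : Form := A.imp bot
/-- Truth: ⊤ := ⊥ → ⊥. -/
def top : Form := bot.imp bot
/-- Conjunction defined classically from → and ⊥. -/
def conj (A B : Form) : Form := (A.imp B.neg).neg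
/-- Biconditional. -/
def biimp (A B : Form) : Form := (A.imp B).conj (B.imp A)
/-- Diamond: ◇A := ¬□¬A. -/
def dia (A : Form) : Form := A.neg.box.neg
end Form

/-- Axioms of the minimal normal calculus K: a complete set of schemata for
classical propositional logic plus the distribution schema. -/
inductive KAxiom : Form → Prop
  | imp1 (A B : Form) : KAxiom (A.imp (B.imp A))
  | imp2 (A B C : Form) : KAxiom ((A.imp (B.imp C)).imp ((A.imp B).imp (A.imp C)))
  | dne (A : Form) : KAxiom (A.neg.neg.imp A)
  | dist (A B : Form) : KAxiom ((A.imp B).box.imp (A.box.imp B.box))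

/-- Deducibility `S.H ⊢ A` in the normal modal system extending K by the
schemata (set of instances) `S`, from hypotheses `H`. -/
inductive Deduce (S : Set Form) : Set Form → Form → Prop
  | kaxiom {H : Set Form} {A : Form} : KAxiom A → Deduce S H A
  | schema {H : Set Form} {A : Form} : A ∈ S → Deduce S H A
  | hyp {H : Set Form} {A : Form} : A ∈ H → Deduce S H A
  | mp {H : Set Form} {A B : Form} : Deduce S H (A.imp B) → Deduce S H A → Deduce S H B
  | nec {H : Set Form} {A : Form} : Deduce S (∅ : Set Form) A → Deduce S H A.box

/-- Kripke forcing: truth of a formula at a world of a model `(D,R,V)`. -/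
def Form.holds {W : Type*} (D : Set W) (R : W → W → Prop) (V : ℕ → W → Prop) :
    Form → W → Prop
  | Form.atom n => fun w => V n w
  | Form.bot => fun _ => False
  | Form.imp A B => fun w => Form.holds D R V A w → Form.holds D R V B w
  | Form.box A => fun w => ∀ x ∈ D, R w x → Form.holds D R V A x

/-- `(D,R)` is a Kripke frame: nonempty universe, accessibility relation on it. -/
def IsFrame {W : Type*} (D : Set W) (R : W → W → Prop) : Prop :=
  D.Nonempty ∧ ∀ x y : W, R x y → x ∈ D ∧ y ∈ D

/-- Validity of a formula in a frame: true at every world under every valuation. -/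
def ValidIn {W : Type*} (D : Set W) (R : W → W → Prop) (A : Form) : Prop :=
  ∀ (V : ℕ → W → Prop), ∀ w ∈ D, Form.holds D R V A w

/-- Conjunction of a list of formulas. -/
def conjList : List Form → Form
  | [] => Form.top
  | A :: X => A.conj (conjList X)

/-- `X` is S-consistent iff the negation of its conjunction is not deducible. -/
def Consistent (S : Set Form) (X : List Form) : Prop :=
  ¬ Deduce S ∅ (conjList X).neg

/-- The subformula relation. -/
inductive Subformula : Form → Form → Prop
  | refl (A : Form) : Subformula A A
  | of_imp_left {B C A : Form} : Subformula (B.imp C) A → Subformula B A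
  | of_imp_right {B C A : Form} : Subformula (B.imp C) A → Subformula C A
  | of_box {B A : Form} : Subformula B.box A → Subformula B A

/-- A subsentence of `A` is a subformula of `A` or the negation of one. -/
def Subsentence (B A : Form) : Prop :=
  Subformula B A ∨ ∃ C : Form, B = C.neg ∧ Subformula C A

/-- `X` is S,A-maximal consistent. -/
def MaxConsistent (S : Set Form) (A : Form) (X : List Form) : Prop :=
  Consistent S X ∧ ∀ B : Form, Subformula B A → B ∈ X ∨ B.neg ∈ X

/-- `Z` is a bisimulation between the models `(D,R,V)` and `(D',R',V')`. -/
def Bisimulation {W W' : Type*} (D : Set W) (R : W → W → Prop) (V : ℕ → W → Prop)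
    (D' : Set W') (R' : W' → W' → Prop) (V' : ℕ → W' → Prop)
    (Z : W → W' → Prop) : Prop :=
  ∀ w w', Z w w' →
    w ∈ D ∧ w' ∈ D' ∧
    (∀ n, V n w ↔ V' n w') ∧
    (∀ x ∈ D, R w x → ∃ x' ∈ D', R' w' x' ∧ Z x x') ∧
    (∀ x' ∈ D', R' w' x' → ∃ x ∈ D, R w x ∧ Z x x')

/-- Pointed models are bisimilar iff some bisimulation relates the two worlds. -/
def Bisimilar {W W' : Type*} (D : Set W) (R : W → W → Prop) (V : ℕ → W → Prop)
    (D' : Set W') (R' : W' → W' → Prop) (V' : ℕ → W' → Prop)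
    (w : W) (w' : W') : Prop :=
  ∃ Z : W → W' → Prop, Bisimulation D R V D' R' V' Z ∧ Z w w'

def Form.lob (A : Form) : Form := (A.box.imp A).box.imp A.box

-- The frame condition expressed by the Löb schema: induction along `R` below every world.
def LobInduction {W : Type*} (D : Set W) (R : W → W → Prop) : Prop :=
  ∀ w ∈ D, ∀ P : W → Prop, (∀ x ∈ D, R w x → (∀ y ∈ D, R x y → P y) → P x) →
    ∀ x ∈ D, R w x → P x

section

variable {W : Type*} {D : Set W} {R : W → W → Prop}

-- An atom can take any predicate as its extension, and any formula defines one.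
theorem validIn_lob_iff_lobInduction : (∀ A : Form, ValidIn D R A.lob) ↔ LobInduction D R :=
  ⟨fun h w hw P => h (Form.atom 0) (fun _ => P) w hw,
    fun h A V w hw => h w hw (Form.holds D R V A)⟩

theorem LobInduction.trans (h : LobInduction D R) :
    ∀ w ∈ D, ∀ x ∈ D, ∀ y ∈ D, R w x → R x y → R w y := by
  intro w hw x hx y hy hwx hxy
  by_contra hwy
  -- The predicate `R w · ∧ · ≠ x` is inductive below `w` unless `x` has a successor off `R w`.
  have hstep : ∀ z ∈ D, R w z → (∀ u ∈ D, R z u → R w u ∧ u ≠ x) → R w z ∧ z ≠ x := by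
    rintro z - hwz hsucc
    refine ⟨hwz, ?_⟩
    rintro rfl
    exact hwy (hsucc y hy hxy).1
  exact (h w hw (fun z => R w z ∧ z ≠ x) hstep x hx hwx).2 rfl

theorem LobInduction.exists_maximal (h : LobInduction D R) :
    ∀ X ⊆ D, X.Nonempty → ∃ w ∈ X, ∀ x ∈ X, ¬ R w x := by
  intro X hXD ⟨w, hwX⟩
  by_contra! hsucc
  have hstep : ∀ z ∈ D, R w z → (∀ u ∈ D, R z u → u ∉ X) → z ∉ X := by
    intro z _ _ hzX hz
    obtain ⟨u, huX, hzu⟩ := hsucc z hz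
    exact hzX u (hXD huX) hzu huX
  obtain ⟨x, hxX, hwx⟩ := hsucc w hwX
  exact h w (hXD hwX) (· ∉ X) hstep x (hXD hxX) hwx hxX

-- A counterexample below `w` has an `R`-maximal instance, and by transitivity its successors
-- are again below `w`, so the induction step applies to it.
theorem lobInduction_of_trans_of_exists_maximal
    (htrans : ∀ w ∈ D, ∀ x ∈ D, ∀ y ∈ D, R w x → R x y → R w y)
    (hmax : ∀ X ⊆ D, X.Nonempty → ∃ w ∈ X, ∀ x ∈ X, ¬ R w x) : LobInduction D R := by
  intro w hw P hstep x hx hwx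
  by_contra hPx
  obtain ⟨m, ⟨hm, hwm, hPm⟩, hmaximal⟩ :=
    hmax {z | z ∈ D ∧ R w z ∧ ¬ P z} (fun _ hz => hz.1) ⟨x, hx, hwx, hPx⟩
  refine hPm (hstep m hm hwm fun y hy hmy => ?_)
  by_contra hPy
  exact hmaximal y ⟨hy, htrans w hw m hm y hy hwm hmy, hPy⟩ hmy

end

theorem valid_lob_iff_trans_cwf_general {W : Type} (D : Set W) (R : W → W → Prop) :
    (∀ A : Form, ValidIn D R ((A.box.imp A).box.imp A.box)) ↔
      ((∀ w ∈ D, ∀ x ∈ D, ∀ y ∈ D, R w x → R x y → R w y) ∧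
        (∀ X ⊆ D, X.Nonempty → ∃ w ∈ X, ∀ x ∈ X, ¬ R w x)) := by
  refine validIn_lob_iff_lobInduction.trans ⟨fun h => ⟨h.trans, h.exists_maximal⟩, ?_⟩
  exact fun ⟨htrans, hmax⟩ => lobInduction_of_trans_of_exists_maximal htrans hmax

theorem valid_lob_iff_trans_cwf {W : Type} (D : Set W) (R : W → W → Prop)
    (hF : IsFrame D R) :
    (∀ A : Form, ValidIn D R ((A.box.imp A).box.imp A.box)) ↔
      ((∀ w ∈ D, ∀ x ∈ D, ∀ y ∈ D, R w x → R x y → R w y) ∧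
        (∀ X ⊆ D, X.Nonempty → ∃ w ∈ X, ∀ x ∈ X, ¬ R w x)) :=
  valid_lob_iff_trans_cwf_general D R
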